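/- arXiv:2409.15191 — 4 statements merged into one kernel-verified Lean document; each statement's English description precedes it below -/
import Mathlib

section
/- Let G be a q-cut-dense graph on n vertices and U ⊆ V(G) with |U| ≤ q·n/8. Then the induced subgraph G − U is (q/2)-cut-dense. -/
/-- A graph `G` is `q`-cut-dense if for every partition of its vertex set into two parts
`A, B`, the number of edges between `A` and `B` is at least `q·|A|·|B|`. -/
def CutDense {V : Type} (G : SimpleGraph V) (q : ℝ) : Prop :=
  ∀ A B : Set V, A ∪ B = Set.univ → Disjoint A B →
    q * (A.ncard : ℝ) * (B.ncard : ℝ) ≤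
      (Set.ncard {p : V × V | p.1 ∈ A ∧ p.2 ∈ B ∧ G.Adj p.1 p.2} : ℝ)

lemma ncard_prod' {V : Type} (s t : Set V) : (s ×ˢ t).ncard = s.ncard * t.ncard := by
  rw [← Nat.card_coe_set_eq, ← Nat.card_coe_set_eq, ← Nat.card_coe_set_eq,
    Nat.card_congr (Equiv.Set.prod s t), Nat.card_prod]

lemma count_swap {V : Type} (G : SimpleGraph V) (A B : Set V) :
    Set.ncard {p : V × V | p.1 ∈ A ∧ p.2 ∈ B ∧ G.Adj p.1 p.2}
      = Set.ncard {p : V × V | p.1 ∈ B ∧ p.2 ∈ A ∧ G.Adj p.1 p.2} := by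
  rw [show {p : V × V | p.1 ∈ B ∧ p.2 ∈ A ∧ G.Adj p.1 p.2}
      = Prod.swap '' {p : V × V | p.1 ∈ A ∧ p.2 ∈ B ∧ G.Adj p.1 p.2} by
    ext ⟨x, y⟩
    constructor
    · rintro ⟨hx, hy, hadj⟩
      exact ⟨(y, x), ⟨hy, hx, hadj.symm⟩, rfl⟩
    · rintro ⟨⟨a, b⟩, ⟨ha, hb, hadj⟩, h⟩
      cases h
      exact ⟨hb, ha, hadj.symm⟩]
  rw [Set.ncard_image_of_injective _ Prod.swap_injective]

/-- The key estimate: if `|U| ≤ (q/2)|A'|` then the cut between `A'` and `B'` is dense. -/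
lemma key {V : Type} [Fintype V] (G : SimpleGraph V) (q : ℝ) (hq : 0 < q)
    (hG : CutDense G q) (U A' B' : Set V)
    (hcov : A' ∪ B' = Uᶜ) (hdisj : Disjoint A' B')
    (hA : (U.ncard : ℝ) ≤ q / 2 * (A'.ncard : ℝ)) :
    q / 2 * (A'.ncard : ℝ) * (B'.ncard : ℝ) ≤
      (Set.ncard {p : V × V | p.1 ∈ A' ∧ p.2 ∈ B' ∧ G.Adj p.1 p.2} : ℝ) := by
  have hA'U : A' ⊆ Uᶜ := hcov ▸ Set.subset_union_left
  have hB'U : B' ⊆ Uᶜ := hcov ▸ Set.subset_union_right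
  have hdAU : Disjoint A' U := Set.disjoint_left.2 fun x hx => hA'U hx
  have hdBU : Disjoint U B' := (Set.disjoint_left.2 fun x hx => hB'U hx).symm
  have hcov2 : (A' ∪ U) ∪ B' = Set.univ := by
    rw [Set.union_right_comm, hcov, Set.compl_union_self]
  have hdisj2 : Disjoint (A' ∪ U) B' := hdisj.union_left hdBU
  have hmain := hG (A' ∪ U) B' hcov2 hdisj2
  have hcardU : (A' ∪ U).ncard = A'.ncard + U.ncard :=
    Set.ncard_union_eq hdAU (Set.toFinite _) (Set.toFinite _)
  -- split the pair count
  set S1 := {p : V × V | p.1 ∈ A' ∧ p.2 ∈ B' ∧ G.Adj p.1 p.2}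
  set S2 := {p : V × V | p.1 ∈ U ∧ p.2 ∈ B' ∧ G.Adj p.1 p.2}
  have hsplit : {p : V × V | p.1 ∈ A' ∪ U ∧ p.2 ∈ B' ∧ G.Adj p.1 p.2} = S1 ∪ S2 := by
    ext ⟨x, y⟩
    simp only [S1, S2, Set.mem_setOf_eq, Set.mem_union]
    tauto
  have hdS : Disjoint S1 S2 := by
    rw [Set.disjoint_left]
    rintro ⟨x, y⟩ ⟨hx, -⟩ ⟨hx', -⟩
    exact (Set.disjoint_left.1 hdAU hx) hx'
  have hcount : ({p : V × V | p.1 ∈ A' ∪ U ∧ p.2 ∈ B' ∧ G.Adj p.1 p.2}).ncard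
      = S1.ncard + S2.ncard := by
    rw [hsplit]; exact Set.ncard_union_eq hdS (Set.toFinite _) (Set.toFinite _)
  have hS2le : S2.ncard ≤ U.ncard * B'.ncard := by
    rw [← ncard_prod']
    apply Set.ncard_le_ncard _ (Set.toFinite _)
    rintro ⟨x, y⟩ ⟨hx, hy, -⟩
    exact ⟨hx, hy⟩
  rw [hcount, hcardU] at hmain
  push_cast at hmain
  have hS2le' : (S2.ncard : ℝ) ≤ (U.ncard : ℝ) * (B'.ncard : ℝ) := by exact_mod_cast hS2le
  have hU0 : (0 : ℝ) ≤ (U.ncard : ℝ) := Nat.cast_nonneg _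
  have hB0 : (0 : ℝ) ≤ (B'.ncard : ℝ) := Nat.cast_nonneg _
  nlinarith [hmain, hS2le', mul_nonneg hU0 hB0]

lemma side (q u x n : ℝ) (hq : 0 < q) (hq1 : q ≤ 1) (hu : 0 ≤ u) (hU : u ≤ q * n / 8)
    (hx : n - u ≤ 2 * x) : u ≤ q / 2 * x := by
  nlinarith [mul_le_mul_of_nonneg_left hx hq.le, mul_nonneg (by linarith : (0:ℝ) ≤ 1 - q) hu]

/-- If `G` is `q`-cut-dense on `n` vertices and `U ⊆ V(G)` has
`|U| ≤ q·n/8`, then the induced subgraph `G − U` is `(q/2)`-cut-dense. -/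
theorem stmt4 {V : Type} [Fintype V] (G : SimpleGraph V) (q : ℝ)
    (hG : CutDense G q) (U : Set V)
    (hU : (U.ncard : ℝ) ≤ q * (Fintype.card V : ℝ) / 8) :
    CutDense (G.induce Uᶜ) (q / 2) := by
  intro A B hcov hdisj
  have hcount0 : (0 : ℝ) ≤
      (Set.ncard {p : ↥Uᶜ × ↥Uᶜ | p.1 ∈ A ∧ p.2 ∈ B ∧ (G.induce Uᶜ).Adj p.1 p.2} : ℝ) :=
    Nat.cast_nonneg _
  by_cases hq : q ≤ 0
  · have hA0 : (0 : ℝ) ≤ (A.ncard : ℝ) := Nat.cast_nonneg _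
    have hB0 : (0 : ℝ) ≤ (B.ncard : ℝ) := Nat.cast_nonneg _
    nlinarith [mul_nonneg hA0 hB0]
  push_neg at hq
  rcases A.eq_empty_or_nonempty with rfl | hAne
  · simp only [Set.ncard_empty, Nat.cast_zero, mul_zero, zero_mul]
    exact hcount0
  rcases B.eq_empty_or_nonempty with rfl | hBne
  · simp only [Set.ncard_empty, Nat.cast_zero, mul_zero]
    exact hcount0
  -- lift to V
  set A' := (Subtype.val : ↥Uᶜ → V) '' A with hA'def
  set B' := (Subtype.val : ↥Uᶜ → V) '' B with hB'def
  have hinj : Function.Injective (Subtype.val : ↥Uᶜ → V) := Subtype.val_injective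
  have hcardA : A'.ncard = A.ncard := Set.ncard_image_of_injective A hinj
  have hcardB : B'.ncard = B.ncard := Set.ncard_image_of_injective B hinj
  have hcov' : A' ∪ B' = Uᶜ := by
    rw [hA'def, hB'def, ← Set.image_union, hcov, Set.image_univ, Subtype.range_coe]
  have hdisj' : Disjoint A' B' := (Set.disjoint_image_iff hinj).2 hdisj
  -- the pair counts agree
  have hcounteq : Set.ncard {p : ↥Uᶜ × ↥Uᶜ | p.1 ∈ A ∧ p.2 ∈ B ∧ (G.induce Uᶜ).Adj p.1 p.2}
      = Set.ncard {p : V × V | p.1 ∈ A' ∧ p.2 ∈ B' ∧ G.Adj p.1 p.2} := by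
    rw [show {p : V × V | p.1 ∈ A' ∧ p.2 ∈ B' ∧ G.Adj p.1 p.2}
        = (Prod.map Subtype.val Subtype.val) ''
            {p : ↥Uᶜ × ↥Uᶜ | p.1 ∈ A ∧ p.2 ∈ B ∧ (G.induce Uᶜ).Adj p.1 p.2} by
      ext ⟨x, y⟩
      constructor
      · rintro ⟨⟨a, ha, rfl⟩, ⟨b, hb, rfl⟩, hadj⟩
        exact ⟨(a, b), ⟨ha, hb, hadj⟩, rfl⟩
      · rintro ⟨⟨a, b⟩, ⟨ha, hb, hadj⟩, h⟩
        cases h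
        exact ⟨⟨a, ha, rfl⟩, ⟨b, hb, rfl⟩, hadj⟩]
    rw [Set.ncard_image_of_injective _ (hinj.prodMap hinj)]
  -- `q ≤ 1` since there are at least two vertices
  obtain ⟨a, ha⟩ := hAne
  obtain ⟨b, hb⟩ := hBne
  have hab : (a : V) ≠ (b : V) := fun h => by
    have : a = b := hinj h
    exact (Set.disjoint_left.1 hdisj ha) (this ▸ hb)
  have hn2 : 2 ≤ Fintype.card V := Fintype.one_lt_card_iff_nontrivial.2 ⟨⟨a, b, hab⟩⟩
  have hq1 : q ≤ 1 := by
    have h1 := hG {(a : V)} ({(a : V)}ᶜ) (Set.union_compl_self _) (disjoint_compl_right)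
    have hle : Set.ncard {p : V × V | p.1 ∈ ({(a : V)} : Set V) ∧ p.2 ∈ ({(a : V)}ᶜ : Set V)
        ∧ G.Adj p.1 p.2} ≤ (({(a : V)} : Set V) ×ˢ ({(a : V)}ᶜ : Set V)).ncard := by
      apply Set.ncard_le_ncard _ (Set.toFinite _)
      rintro ⟨x, y⟩ ⟨hx, hy, -⟩
      exact ⟨hx, hy⟩
    rw [ncard_prod', Set.ncard_singleton, one_mul] at hle
    have hcompl : ({(a : V)} : Set V).ncard + (({(a : V)}ᶜ : Set V)).ncard = Fintype.card V := by
      rw [Set.ncard_add_ncard_compl, Nat.card_eq_fintype_card]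
    rw [Set.ncard_singleton] at h1 hcompl
    have hm : 1 ≤ ({(a : V)}ᶜ : Set V).ncard := by omega
    have hle' : (Set.ncard {p : V × V | p.1 ∈ ({(a : V)} : Set V) ∧ p.2 ∈ ({(a : V)}ᶜ : Set V)
        ∧ G.Adj p.1 p.2} : ℝ) ≤ (({(a : V)}ᶜ : Set V).ncard : ℝ) := by exact_mod_cast hle
    have hm' : (1 : ℝ) ≤ (({(a : V)}ᶜ : Set V).ncard : ℝ) := by exact_mod_cast hm
    push_cast at h1
    nlinarith [h1, hle', hm']
  -- cardinality relation
  have hsum : A'.ncard + B'.ncard + U.ncard = Fintype.card V := by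
    have h1 : A'.ncard + B'.ncard = (Uᶜ : Set V).ncard := by
      rw [← Set.ncard_union_eq hdisj' (Set.toFinite _) (Set.toFinite _), hcov']
    have h2 : (Uᶜ : Set V).ncard + U.ncard = Fintype.card V := by
      have := Set.ncard_add_ncard_compl (Uᶜ : Set V) (Set.toFinite _) (Set.toFinite _)
      rwa [compl_compl, Nat.card_eq_fintype_card] at this
    omega
  have hsumR : (A'.ncard : ℝ) + (B'.ncard : ℝ) + (U.ncard : ℝ) = (Fintype.card V : ℝ) := by
    exact_mod_cast hsum
  -- case on which side is large
  rw [hcounteq, ← hcardA, ← hcardB]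
  have hUn : (0 : ℝ) ≤ (U.ncard : ℝ) := Nat.cast_nonneg _
  rcases le_total (B'.ncard : ℝ) (A'.ncard : ℝ) with hAB | hAB
  · apply key G q hq hG U A' B' hcov' hdisj'
    exact side q (U.ncard : ℝ) (A'.ncard : ℝ) (Fintype.card V : ℝ) hq hq1 hUn hU
      (by linarith)
  · rw [count_swap]
    have h := key G q hq hG U B' A' (by rw [Set.union_comm]; exact hcov') hdisj'.symm
      (side q (U.ncard : ℝ) (B'.ncard : ℝ) (Fintype.card V : ℝ) hq hq1 hUn hU (by linarith))
    linarith [h, (by ring : q / 2 * (B'.ncard : ℝ) * (A'.ncard : ℝ)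
      = q / 2 * (A'.ncard : ℝ) * (B'.ncard : ℝ))]
end

section
/- Let G₁ and G₂ be q-cut-dense graphs. Then the union G₁ ∪ G₂ (on vertex set V(G₁) ∪ V(G₂) with edge set E(G₁) ∪ E(G₂)) is q'-cut-dense, where q' = q·|V(G₁) ∩ V(G₂)| / (4·|V(G₁) ∪ V(G₂)|). -/
/-- A graph with a designated vertex set (modelled as a subgraph of the complete graph)
is `q`-cut-dense if for every partition of its vertex set into two parts `A, B`,
the number of its edges between `A` and `B` is at least `q·|A|·|B|`. -/
def SubCutDense {V : Type} (H : (⊤ : SimpleGraph V).Subgraph) (q : ℝ) : Prop :=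
  ∀ A B : Set V, A ∪ B = H.verts → Disjoint A B →
    q * (A.ncard : ℝ) * (B.ncard : ℝ) ≤
      (Set.ncard {p : V × V | p.1 ∈ A ∧ p.2 ∈ B ∧ H.Adj p.1 p.2} : ℝ)

lemma subCutDense_aux {V : Type} [Fintype V] (G H : (⊤ : SimpleGraph V).Subgraph)
    (hGH : G ≤ H) (q : ℝ) (h : SubCutDense G q) (A B : Set V) (hAB : A ∪ B = H.verts)
    (hdisj : Disjoint A B) :
    q * ((A ∩ G.verts).ncard : ℝ) * ((B ∩ G.verts).ncard : ℝ) ≤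
      (Set.ncard {p : V × V | p.1 ∈ A ∧ p.2 ∈ B ∧ H.Adj p.1 p.2} : ℝ) := by
  have hGv : G.verts ⊆ H.verts := hGH.1
  have hunion : (A ∩ G.verts) ∪ (B ∩ G.verts) = G.verts := by
    rw [← Set.union_inter_distrib_right, hAB, Set.inter_eq_right.mpr hGv]
  have h1 := h (A ∩ G.verts) (B ∩ G.verts) hunion
    (hdisj.mono Set.inter_subset_left Set.inter_subset_left)
  refine h1.trans ?_
  have hsub : {p : V × V | p.1 ∈ A ∩ G.verts ∧ p.2 ∈ B ∩ G.verts ∧ G.Adj p.1 p.2} ⊆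
      {p : V × V | p.1 ∈ A ∧ p.2 ∈ B ∧ H.Adj p.1 p.2} := by
    rintro ⟨x, y⟩ ⟨⟨hx, _⟩, ⟨hy, _⟩, hadj⟩
    exact ⟨hx, hy, hGH.2 hadj⟩
  exact_mod_cast Nat.cast_le.mpr (Set.ncard_le_ncard hsub (Set.toFinite _))

lemma cutdense_arith (q k x y a b n : ℝ) (hq : 0 < q) (hk : k ≤ 2 * a)
    (hy : y ≤ 2 * b) (hx : x ≤ n) (hy0 : 0 ≤ y) (hx0 : 0 ≤ x) (hk0 : 0 ≤ k)
    (ha0 : 0 ≤ a) (hb0 : 0 ≤ b) : q * k * x * y ≤ q * a * b * (4 * n) := by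
  have h1 : k * y ≤ (2 * a) * (2 * b) := mul_le_mul hk hy hy0 (by positivity)
  have h2 : (k * y) * x ≤ ((2 * a) * (2 * b)) * n :=
    mul_le_mul h1 hx hx0 (by positivity)
  calc q * k * x * y = q * ((k * y) * x) := by ring
    _ ≤ q * (((2 * a) * (2 * b)) * n) := mul_le_mul_of_nonneg_left h2 hq.le
    _ = q * a * b * (4 * n) := by ring

/-- If `G₁` and `G₂` are `q`-cut-dense, then their union (on vertex set
`V(G₁) ∪ V(G₂)` with edge set `E(G₁) ∪ E(G₂)`) is
`q·|V(G₁) ∩ V(G₂)| / (4·|V(G₁) ∪ V(G₂)|)`-cut-dense. -/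
theorem stmt5 {V : Type} [Fintype V] (G₁ G₂ : (⊤ : SimpleGraph V).Subgraph) (q : ℝ)
    (h₁ : SubCutDense G₁ q) (h₂ : SubCutDense G₂ q) :
    SubCutDense (G₁ ⊔ G₂)
      (q * ((G₁.verts ∩ G₂.verts).ncard : ℝ) / (4 * ((G₁.verts ∪ G₂.verts).ncard : ℝ))) := by
  intro A B hAB hdisj
  have hverts : (G₁ ⊔ G₂).verts = G₁.verts ∪ G₂.verts := rfl
  set n : ℝ := ((G₁.verts ∪ G₂.verts).ncard : ℝ) with hn_def
  set k : ℝ := ((G₁.verts ∩ G₂.verts).ncard : ℝ) with hk_def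
  have hk0 : (0:ℝ) ≤ k := Nat.cast_nonneg _
  have hn0 : (0:ℝ) ≤ n := Nat.cast_nonneg _
  have hA0 : (0:ℝ) ≤ (A.ncard : ℝ) := Nat.cast_nonneg _
  have hB0 : (0:ℝ) ≤ (B.ncard : ℝ) := Nat.cast_nonneg _
  have hcount0 : (0:ℝ) ≤
      (Set.ncard {p : V × V | p.1 ∈ A ∧ p.2 ∈ B ∧ (G₁ ⊔ G₂).Adj p.1 p.2} : ℝ) :=
    Nat.cast_nonneg _
  rcases le_or_gt q 0 with hq | hq
  · -- q ≤ 0 : left side is nonpositive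
    have hq' : q * k / (4 * n) ≤ 0 := by
      apply div_nonpos_of_nonpos_of_nonneg
      · exact mul_nonpos_of_nonpos_of_nonneg hq hk0
      · positivity
    refine le_trans ?_ hcount0
    have := mul_nonneg hA0 hB0
    nlinarith
  rcases eq_or_lt_of_le hn0 with h0 | hn
  · -- n = 0 : coefficient is 0
    rw [← h0]
    simpa using hcount0
  -- main case : q > 0, n > 0
  have hABv : A ∪ B = G₁.verts ∪ G₂.verts := hAB
  have hAn : (A.ncard : ℝ) ≤ n := by
    exact_mod_cast Nat.cast_le.mpr (Set.ncard_le_ncard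
      (hABv ▸ Set.subset_union_left) (Set.toFinite _))
  have hBn : (B.ncard : ℝ) ≤ n := by
    exact_mod_cast Nat.cast_le.mpr (Set.ncard_le_ncard
      (hABv ▸ Set.subset_union_right) (Set.toFinite _))
  set W := G₁.verts ∩ G₂.verts with hW_def
  have hWsplit : (A ∩ W) ∪ (B ∩ W) = W := by
    rw [← Set.union_inter_distrib_right, hABv, Set.inter_eq_right]
    exact Set.inter_subset_left.trans Set.subset_union_left
  have hWk : k = ((A ∩ W).ncard : ℝ) + ((B ∩ W).ncard : ℝ) := by
    have hu := Set.ncard_union_eq (hdisj.mono Set.inter_subset_left Set.inter_subset_left)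
      (Set.toFinite (A ∩ W)) (Set.toFinite (B ∩ W))
    rw [hWsplit] at hu
    rw [hk_def, hu]; push_cast; ring
  -- A∩W ⊆ A∩Vⱼ bounds
  have hAW1 : ((A ∩ W).ncard : ℝ) ≤ ((A ∩ G₁.verts).ncard : ℝ) :=
    Nat.cast_le.mpr (Set.ncard_le_ncard
      (Set.inter_subset_inter_right _ Set.inter_subset_left) (Set.toFinite _))
  have hAW2 : ((A ∩ W).ncard : ℝ) ≤ ((A ∩ G₂.verts).ncard : ℝ) :=
    Nat.cast_le.mpr (Set.ncard_le_ncard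
      (Set.inter_subset_inter_right _ Set.inter_subset_right) (Set.toFinite _))
  have hBW1 : ((B ∩ W).ncard : ℝ) ≤ ((B ∩ G₁.verts).ncard : ℝ) :=
    Nat.cast_le.mpr (Set.ncard_le_ncard
      (Set.inter_subset_inter_right _ Set.inter_subset_left) (Set.toFinite _))
  have hBW2 : ((B ∩ W).ncard : ℝ) ≤ ((B ∩ G₂.verts).ncard : ℝ) :=
    Nat.cast_le.mpr (Set.ncard_le_ncard
      (Set.inter_subset_inter_right _ Set.inter_subset_right) (Set.toFinite _))
  -- |B| ≤ |B∩V₁| + |B∩V₂|, same for A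
  have hBsplit : (B.ncard : ℝ) ≤ ((B ∩ G₁.verts).ncard : ℝ) + ((B ∩ G₂.verts).ncard : ℝ) := by
    have hBeq : B = (B ∩ G₁.verts) ∪ (B ∩ G₂.verts) := by
      rw [← Set.inter_union_distrib_left]
      exact (Set.inter_eq_left.mpr (hABv ▸ Set.subset_union_right)).symm
    calc (B.ncard : ℝ) = (((B ∩ G₁.verts) ∪ (B ∩ G₂.verts)).ncard : ℝ) := by rw [← hBeq]
      _ ≤ _ := by exact_mod_cast Set.ncard_union_le _ _
  have hAsplit : (A.ncard : ℝ) ≤ ((A ∩ G₁.verts).ncard : ℝ) + ((A ∩ G₂.verts).ncard : ℝ) := by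
    have hAeq : A = (A ∩ G₁.verts) ∪ (A ∩ G₂.verts) := by
      rw [← Set.inter_union_distrib_left]
      exact (Set.inter_eq_left.mpr (hABv ▸ Set.subset_union_left)).symm
    calc (A.ncard : ℝ) = (((A ∩ G₁.verts) ∪ (A ∩ G₂.verts)).ncard : ℝ) := by rw [← hAeq]
      _ ≤ _ := by exact_mod_cast Set.ncard_union_le _ _
  have aux1 := subCutDense_aux G₁ (G₁ ⊔ G₂) le_sup_left q h₁ A B hAB hdisj
  have aux2 := subCutDense_aux G₂ (G₁ ⊔ G₂) le_sup_right q h₂ A B hAB hdisj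
  have ha1 : (0:ℝ) ≤ ((A ∩ G₁.verts).ncard : ℝ) := Nat.cast_nonneg _
  have ha2 : (0:ℝ) ≤ ((A ∩ G₂.verts).ncard : ℝ) := Nat.cast_nonneg _
  have hb1 : (0:ℝ) ≤ ((B ∩ G₁.verts).ncard : ℝ) := Nat.cast_nonneg _
  have hb2 : (0:ℝ) ≤ ((B ∩ G₂.verts).ncard : ℝ) := Nat.cast_nonneg _
  rw [div_mul_eq_mul_div, div_mul_eq_mul_div, div_le_iff₀ (by positivity)]
  rcases le_or_gt k (2 * ((A ∩ W).ncard : ℝ)) with hAW | hBW'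
  · -- A holds at least half of W
    rcases le_or_gt (B.ncard : ℝ) (2 * ((B ∩ G₁.verts).ncard : ℝ)) with hB | hB
    · refine le_trans ?_ (mul_le_mul_of_nonneg_right aux1 (by positivity))
      exact cutdense_arith q k _ _ _ _ n hq (by linarith) hB hAn hB0 hA0 hk0 ha1 hb1
    · have hB2 : (B.ncard : ℝ) ≤ 2 * ((B ∩ G₂.verts).ncard : ℝ) := by linarith
      refine le_trans ?_ (mul_le_mul_of_nonneg_right aux2 (by positivity))
      exact cutdense_arith q k _ _ _ _ n hq (by linarith) hB2 hAn hB0 hA0 hk0 ha2 hb2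
  · -- B holds at least half of W
    have hBW : k ≤ 2 * ((B ∩ W).ncard : ℝ) := by linarith [hWk]
    rcases le_or_gt (A.ncard : ℝ) (2 * ((A ∩ G₁.verts).ncard : ℝ)) with hA | hA
    · refine le_trans ?_ (mul_le_mul_of_nonneg_right aux1 (by positivity))
      have h := cutdense_arith q k (B.ncard : ℝ) (A.ncard : ℝ)
        ((B ∩ G₁.verts).ncard : ℝ) ((A ∩ G₁.verts).ncard : ℝ) n hq
        (by linarith) hA hBn hA0 hB0 hk0 hb1 ha1
      calc q * k * (A.ncard : ℝ) * (B.ncard : ℝ)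
          = q * k * (B.ncard : ℝ) * (A.ncard : ℝ) := by ring
        _ ≤ q * ((B ∩ G₁.verts).ncard : ℝ) * ((A ∩ G₁.verts).ncard : ℝ) * (4 * n) := h
        _ = q * ((A ∩ G₁.verts).ncard : ℝ) * ((B ∩ G₁.verts).ncard : ℝ) * (4 * n) := by ring
    · have hA2 : (A.ncard : ℝ) ≤ 2 * ((A ∩ G₂.verts).ncard : ℝ) := by linarith
      refine le_trans ?_ (mul_le_mul_of_nonneg_right aux2 (by positivity))
      have h := cutdense_arith q k (B.ncard : ℝ) (A.ncard : ℝ)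
        ((B ∩ G₂.verts).ncard : ℝ) ((A ∩ G₂.verts).ncard : ℝ) n hq
        (by linarith) hA2 hBn hA0 hB0 hk0 hb2 ha2
      calc q * k * (A.ncard : ℝ) * (B.ncard : ℝ)
          = q * k * (B.ncard : ℝ) * (A.ncard : ℝ) := by ring
        _ ≤ q * ((B ∩ G₂.verts).ncard : ℝ) * ((A ∩ G₂.verts).ncard : ℝ) * (4 * n) := h
        _ = q * ((A ∩ G₂.verts).ncard : ℝ) * ((B ∩ G₂.verts).ncard : ℝ) * (4 * n) := by ring
end

section
/- For every graph G on n vertices and every q > 0, one can delete at most q·n² edges from G to obtain a spanning subgraph all of whose connected components are q-cut-dense. -/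
open Set

namespace SimpleGraph

variable {V : Type}

def cutAlong (G : SimpleGraph V) (S : Set V) : SimpleGraph V where
  Adj x y := G.Adj x y ∧ (x ∈ S ↔ y ∈ S)
  symm := ⟨fun _ _ h => ⟨h.1.symm, h.2.symm⟩⟩
  loopless := ⟨fun x h => G.loopless.irrefl x h.1⟩

@[simp]
lemma cutAlong_adj {G : SimpleGraph V} {S : Set V} {x y : V} :
    (G.cutAlong S).Adj x y ↔ G.Adj x y ∧ (x ∈ S ↔ y ∈ S) := Iff.rfl

lemma cutAlong_le (G : SimpleGraph V) (S : Set V) : G.cutAlong S ≤ G := fun _ _ h => h.1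

lemma not_reachable_cutAlong (G : SimpleGraph V) {S : Set V} {x y : V} (hx : x ∈ S)
    (hy : y ∉ S) : ¬ (G.cutAlong S).Reachable x y := by
  rintro ⟨p⟩
  obtain ⟨d, -, hd₁, hd₂⟩ := p.exists_boundary_dart S hx hy
  exact hd₂ ((cutAlong_adj.mp d.adj).2.mp hd₁)

lemma edgeSet_diff_cutAlong_subset (G : SimpleGraph V) (S : Set V) :
    G.edgeSet \ (G.cutAlong S).edgeSet ⊆
      (fun p : V × V => s(p.1, p.2)) '' {p | p.1 ∈ S ∧ p.2 ∉ S ∧ G.Adj p.1 p.2} := by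
  rintro ⟨x, y⟩ ⟨hxy, hcut⟩
  have hxy' : ¬ (x ∈ S ↔ y ∈ S) := fun h => hcut ⟨hxy, h⟩
  by_cases hx : x ∈ S
  · exact ⟨(x, y), ⟨hx, fun hy => hxy' (iff_of_true hx hy), hxy⟩, rfl⟩
  · exact ⟨(y, x), ⟨by tauto, hx, G.adj_symm hxy⟩, Sym2.eq_swap⟩

def reachablePairs (G : SimpleGraph V) : Set (V × V) := {p | G.Reachable p.1 p.2}

lemma ncard_reachablePairs_le [Fintype V] (G : SimpleGraph V) :
    G.reachablePairs.ncard ≤ Fintype.card V ^ 2 := by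
  calc G.reachablePairs.ncard ≤ (univ : Set (V × V)).ncard := ncard_le_ncard (subset_univ _)
    _ = Fintype.card V ^ 2 := by rw [ncard_univ, Nat.card_eq_fintype_card, Fintype.card_prod, sq]

lemma ncard_reachablePairs_add_le [Finite V] {G H : SimpleGraph V} (hHG : H ≤ G)
    {X Y : Set V} (hXY : ∀ x ∈ X, ∀ y ∈ Y, G.Reachable x y ∧ ¬ H.Reachable x y) :
    H.reachablePairs.ncard + 2 * (X.ncard * Y.ncard) ≤ G.reachablePairs.ncard := by
  have hXY_YX : Disjoint (X ×ˢ Y) (Y ×ˢ X) :=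
    Set.disjoint_left.mpr fun _ ⟨hx, _⟩ ⟨hy, _⟩ => (hXY _ hx _ hy).2 (Reachable.refl _)
  have hH_cross : Disjoint H.reachablePairs (X ×ˢ Y ∪ Y ×ˢ X) := by
    refine Set.disjoint_left.mpr fun p (hp : H.Reachable p.1 p.2) hpXY => ?_
    rcases hpXY with ⟨hx, hy⟩ | ⟨hy, hx⟩
    · exact (hXY _ hx _ hy).2 hp
    · exact (hXY _ hx _ hy).2 hp.symm
  have hsub : H.reachablePairs ∪ (X ×ˢ Y ∪ Y ×ˢ X) ⊆ G.reachablePairs := by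
    rintro p ((hp : H.Reachable p.1 p.2) | ⟨hx, hy⟩ | ⟨hy, hx⟩)
    · exact hp.mono hHG
    · exact (hXY _ hx _ hy).1
    · exact (hXY _ hx _ hy).1.symm
  calc H.reachablePairs.ncard + 2 * (X.ncard * Y.ncard)
      = (H.reachablePairs ∪ (X ×ˢ Y ∪ Y ×ˢ X)).ncard := by
        rw [ncard_union_eq hH_cross, ncard_union_eq hXY_YX, ncard_prod, ncard_prod]; ring
    _ ≤ G.reachablePairs.ncard := ncard_le_ncard hsub

lemma ncard_crossingPairs_eq_induce {G : SimpleGraph V} (c : G.ConnectedComponent)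
    {A B : Set c.supp} (hAB : A ∪ B = univ) (hdisj : Disjoint A B) :
    {p : V × V | p.1 ∈ (↑) '' A ∧ p.2 ∉ ((↑) '' A : Set V) ∧ G.Adj p.1 p.2}.ncard =
      {p : c.supp × c.supp | p.1 ∈ A ∧ p.2 ∈ B ∧ (G.induce c.supp).Adj p.1 p.2}.ncard := by
  rw [← ncard_image_of_injective _ (Subtype.val_injective.prodMap Subtype.val_injective)]
  congr 1
  ext ⟨x, y⟩
  simp only [mem_ofPred_eq, mem_image, Prod.exists, Prod.map, Prod.mk.injEq, comap_adj,
    Function.Embedding.subtype_apply]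
  constructor
  · rintro ⟨⟨a, ha, rfl⟩, hy, hxy⟩
    let b : c.supp := ⟨y, c.mem_supp_of_adj_mem_supp a.2 hxy⟩
    have hb : b ∈ B := (eq_univ_iff_forall.mp hAB b).resolve_left fun hb => hy ⟨b, hb, rfl⟩
    exact ⟨a, b, ⟨ha, hb, hxy⟩, rfl, rfl⟩
  · rintro ⟨a, b, ⟨ha, hb, hab⟩, rfl, rfl⟩
    refine ⟨⟨a, ha, rfl⟩, ?_, hab⟩
    rintro ⟨b', hb', hbb'⟩
    exact Set.disjoint_left.mp hdisj (Subtype.ext hbb' ▸ hb') hb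

lemma exists_cutAlong_of_not_cutDense [Finite V] {G : SimpleGraph V} {q : ℝ}
    {c : G.ConnectedComponent} (hc : ¬ CutDense (G.induce c.supp) q) :
    ∃ S : Set V, ∃ m : ℕ, 0 < m ∧
      ((G.edgeSet \ (G.cutAlong S).edgeSet).ncard : ℝ) ≤ q * m ∧
      (G.cutAlong S).reachablePairs.ncard + 2 * m ≤ G.reachablePairs.ncard := by
  simp only [CutDense, not_forall, not_le] at hc
  obtain ⟨A, B, hAB, hdisj, hcut⟩ := hc
  rw [← ncard_crossingPairs_eq_induce c hAB hdisj, mul_assoc, ← Nat.cast_mul] at hcut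
  refine ⟨(↑) '' A, A.ncard * B.ncard, Nat.pos_of_ne_zero fun h0 => ?_, ?_, ?_⟩
  · rw [h0, Nat.cast_zero, mul_zero] at hcut
    exact (Nat.cast_nonneg _).not_gt hcut
  · refine le_trans ?_ hcut.le
    exact_mod_cast (ncard_le_ncard (G.edgeSet_diff_cutAlong_subset _)).trans ncard_image_le
  · rw [← ncard_image_of_injective A Subtype.val_injective,
      ← ncard_image_of_injective B Subtype.val_injective]
    refine ncard_reachablePairs_add_le (G.cutAlong_le _) ?_
    rintro _ ⟨a, ha, rfl⟩ _ ⟨b, hb, rfl⟩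
    refine ⟨c.reachable_of_mem_supp a.2 b.2, G.not_reachable_cutAlong ⟨a, ha, rfl⟩ ?_⟩
    rw [Subtype.val_injective.mem_set_image]
    exact Set.disjoint_right.mp hdisj hb

theorem exists_le_forall_cutDense [Finite V] {q : ℝ} (hq : 0 ≤ q)
    (G : SimpleGraph V) :
    ∃ H ≤ G, ((G.edgeSet \ H.edgeSet).ncard : ℝ) ≤ q * G.reachablePairs.ncard ∧
      ∀ c : H.ConnectedComponent, CutDense (H.induce c.supp) q := by
  induction hn : G.reachablePairs.ncard using Nat.strong_induction_on generalizing G with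
  | _ n ih =>
  by_cases hG : ∀ c : G.ConnectedComponent, CutDense (G.induce c.supp) q
  · exact ⟨G, le_rfl, by simp only [sdiff_self, ncard_empty, Nat.cast_zero]; positivity, hG⟩
  obtain ⟨c, hc⟩ := not_forall.mp hG
  obtain ⟨S, m, hm, hdel, hpairs⟩ := exists_cutAlong_of_not_cutDense hc
  set G' := G.cutAlong S
  obtain ⟨H, hHG', hHdel, hH⟩ := ih _ (by omega) G' rfl
  refine ⟨H, hHG'.trans (G.cutAlong_le S), ?_, hH⟩
  have htri : (G.edgeSet \ H.edgeSet).ncard ≤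
      (G.edgeSet \ G'.edgeSet).ncard + (G'.edgeSet \ H.edgeSet).ncard :=
    (ncard_le_ncard (sdiff_triangle _ _ _)).trans (ncard_union_le _ _)
  have hpairs' : (G'.reachablePairs.ncard : ℝ) + 2 * m ≤ n := by exact_mod_cast hn ▸ hpairs
  calc ((G.edgeSet \ H.edgeSet).ncard : ℝ)
      ≤ (G.edgeSet \ G'.edgeSet).ncard + (G'.edgeSet \ H.edgeSet).ncard := by exact_mod_cast htri
    _ ≤ q * m + q * G'.reachablePairs.ncard := add_le_add hdel hHdel
    _ ≤ q * n := by nlinarith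

end SimpleGraph

/-- From every graph `G` on `n` vertices one can delete at most `q·n²` edges
to obtain a spanning subgraph all of whose connected components (as induced subgraphs)
are `q`-cut-dense. -/
theorem stmt9 {V : Type} [Fintype V] (G : SimpleGraph V) (q : ℝ) (hq : 0 < q) :
    ∃ H : SimpleGraph V, H ≤ G ∧
      ((G.edgeSet \ H.edgeSet).ncard : ℝ) ≤ q * (Fintype.card V : ℝ) ^ 2 ∧
      ∀ c : H.ConnectedComponent, CutDense (H.induce c.supp) q := by
  obtain ⟨H, hHG, hdel, hH⟩ := G.exists_le_forall_cutDense hq.le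
  refine ⟨H, hHG, hdel.trans ?_, hH⟩
  gcongr
  exact_mod_cast G.ncard_reachablePairs_le
end

section
/- Let Δ ≥ 1 be an integer and 0 ≤ λ < 1. Let T be a rooted tree on n vertices with maximum degree at most Δ. Then there is a subtree Q of T containing the root such that (1−2λ)·n ≤ |Q| ≤ (1−λ)·n + 2Δ, and the graph T minus the edges of Q (with isolated vertices removed) has at most Δ connected components, each of order at most λ·n. -/
/-!
Root `T` at `r` and take a vertex `v` whose subtree has at least `λn` vertices, with that
subtree as small as possible; then every child of `v` has a subtree of fewer than `λn`
vertices. The at most `Δ` children together carry at least `λn - 1 - Δ` vertices strictly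
below themselves, and since each child carries fewer than `λn`, some set `A` of children
carries an amount in `[λn - 2Δ, 2λn]`. Cutting off everything strictly below the vertices of
`A` leaves a subtree `Q ∋ r`, and the nontrivial components of `T ∖ Q` are exactly the subtrees
rooted at the vertices of `A`, because the edge from `a ∈ A` up to `v` lies in `Q`.
-/

lemma Finset.set_ncard_biUnion {ι α : Type*} [Finite α] (A : Finset ι) (s : ι → Set α)
    (h : (A : Set ι).PairwiseDisjoint s) : (⋃ i ∈ A, s i).ncard = ∑ i ∈ A, (s i).ncard := by
  rw [← finsum_mem_coe_finset, ← A.finite_toSet.ncard_biUnion (fun i _ ↦ (s i).toFinite) h]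
  simp

lemma Finset.exists_subset_sum_mem_Icc {ι α : Type*} [AddCommGroup α] [LinearOrder α]
    [IsOrderedAddMonoid α] (C : Finset ι) (f : ι → α) {L U : α} (hL : L ≤ ∑ a ∈ C, f a)
    (hU : 0 ≤ U) (hf : ∀ a ∈ C, f a ≤ U - L) : ∃ A ⊆ C, L ≤ ∑ a ∈ A, f a ∧ ∑ a ∈ A, f a ≤ U := by
  classical
  induction C using Finset.induction_on with
  | empty => exact ⟨∅, subset_rfl, by simpa using hL, by simpa using hU⟩
  | insert b C hb ih =>
    rw [Finset.sum_insert hb] at hL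
    by_cases hC : L ≤ ∑ a ∈ C, f a
    · obtain ⟨A, hAC, hA⟩ := ih hC fun a ha ↦ hf a (Finset.mem_insert_of_mem ha)
      exact ⟨A, hAC.trans (Finset.subset_insert _ _), hA⟩
    · refine ⟨insert b C, subset_rfl, by rwa [Finset.sum_insert hb], ?_⟩
      rw [Finset.sum_insert hb]
      calc f b + ∑ a ∈ C, f a ≤ (U - L) + L :=
            add_le_add (hf b (Finset.mem_insert_self _ _)) (not_le.mp hC).le
        _ = U := sub_add_cancel _ _

namespace SimpleGraph

variable {V : Type*} {G : SimpleGraph V}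

lemma deleteEdges_edgeSet_induce_top_adj {s : Set V} {x y : V} :
    (G.deleteEdges ((⊤ : G.Subgraph).induce s).edgeSet).Adj x y ↔
      G.Adj x y ∧ ¬(x ∈ s ∧ y ∈ s) := by
  simp only [deleteEdges_adj, Subgraph.mem_edgeSet, Subgraph.induce_adj, Subgraph.top_adj]
  tauto

lemma ConnectedComponent.supp_connectedComponentMk_subset {S : Set V} {a : V} (ha : a ∈ S)
    (hS : ∀ x y, x ∈ S → G.Adj x y → y ∈ S) : (G.connectedComponentMk a).supp ⊆ S := by
  suffices h : ∀ {u w} (p : G.Walk u w), u ∈ S → w ∈ S from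
    fun x hx ↦ (ConnectedComponent.exact hx).elim fun p ↦ h p.reverse ha
  intro u w p
  induction p with
  | nil => exact id
  | cons h _ ih => exact fun hu ↦ ih (hS _ _ hu h)

lemma ConnectedComponent.exists_adj_of_one_lt_ncard_supp {c : G.ConnectedComponent}
    (hc : 1 < c.supp.ncard) : ∃ x ∈ c.supp, ∃ y, G.Adj x y := by
  obtain ⟨x, hx, y, hy, hxy⟩ := (Set.one_lt_ncard (Set.finite_of_ncard_pos (by omega))).1 hc
  obtain ⟨p⟩ := c.reachable_of_mem_supp hx hy
  exact ⟨x, hx, _, p.adj_snd (p.not_nil_of_ne hxy)⟩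

end SimpleGraph

namespace SimpleGraph.IsTree

variable {V : Type*} {T : SimpleGraph V} (hT : T.IsTree) (r : V)

noncomputable def rootPath (x : V) : T.Walk r x :=
  (hT.existsUnique_path r x).exists.choose

lemma isPath_rootPath (x : V) : (hT.rootPath r x).IsPath :=
  (hT.existsUnique_path r x).exists.choose_spec

lemma rootPath_eq {x : V} {p : T.Walk r x} (hp : p.IsPath) : hT.rootPath r x = p :=
  (hT.existsUnique_path r x).unique (hT.isPath_rootPath r x) hp

noncomputable def depth (x : V) : ℕ := (hT.rootPath r x).length

/-- For `depth x ≤ k` this is `x` itself. -/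
noncomputable def ancestor (x : V) (k : ℕ) : V := (hT.rootPath r x).getVert k

def subtree (a : V) : Set V := {x | hT.ancestor r x (hT.depth r a) = a}

def IsChild (v a : V) : Prop := hT.depth r a = hT.depth r v + 1 ∧ a ∈ hT.subtree r v

variable {r}

lemma rootPath_ancestor (x : V) (k : ℕ) :
    hT.rootPath r (hT.ancestor r x k) = (hT.rootPath r x).take k :=
  hT.rootPath_eq r ((hT.isPath_rootPath r x).take k)

lemma depth_ancestor (x : V) (k : ℕ) :
    hT.depth r (hT.ancestor r x k) = min k (hT.depth r x) := by
  unfold depth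
  rw [rootPath_ancestor]
  exact Walk.take_length ..

lemma ancestor_ancestor (x : V) {j k : ℕ} (h : j ≤ k) :
    hT.ancestor r (hT.ancestor r x k) j = hT.ancestor r x j := by
  change (hT.rootPath r (hT.ancestor r x k)).getVert j = (hT.rootPath r x).getVert j
  rw [rootPath_ancestor]
  exact (Walk.take_getVert ..).trans (by rw [min_eq_right h])

lemma ancestor_zero (x : V) : hT.ancestor r x 0 = r := Walk.getVert_zero _

lemma ancestor_of_depth_le {x : V} {k : ℕ} (h : hT.depth r x ≤ k) : hT.ancestor r x k = x :=
  Walk.getVert_of_length_le _ h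

lemma depth_root : hT.depth r r = 0 := by
  rw [depth, hT.rootPath_eq r Walk.IsPath.nil, Walk.length_nil]

lemma adj_ancestor_succ {x : V} {k : ℕ} (h : k < hT.depth r x) :
    T.Adj (hT.ancestor r x k) (hT.ancestor r x (k + 1)) :=
  Walk.adj_getVert_succ _ h

lemma mem_subtree_self (a : V) : a ∈ hT.subtree r a := hT.ancestor_of_depth_le le_rfl

lemma subtree_root : hT.subtree r r = Set.univ :=
  Set.eq_univ_of_forall fun x ↦ by rw [subtree, Set.mem_ofPred_eq, depth_root, ancestor_zero]

lemma depth_le_of_mem_subtree {a x : V} (h : x ∈ hT.subtree r a) :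
    hT.depth r a ≤ hT.depth r x := by
  have := hT.depth_ancestor (r := r) x (hT.depth r a)
  rw [show hT.ancestor r x (hT.depth r a) = a from h] at this
  omega

lemma eq_of_mem_subtree_of_depth_le {a x : V} (h : x ∈ hT.subtree r a)
    (hd : hT.depth r x ≤ hT.depth r a) : x = a :=
  (hT.ancestor_of_depth_le hd).symm.trans h

lemma depth_lt_of_mem_subtree {a x : V} (h : x ∈ hT.subtree r a) (hne : x ≠ a) :
    hT.depth r a < hT.depth r x :=
  (hT.depth_le_of_mem_subtree h).lt_of_ne fun hd ↦ hne (hT.eq_of_mem_subtree_of_depth_le h hd.ge)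

lemma mem_subtree_ancestor (x : V) (k : ℕ) : x ∈ hT.subtree r (hT.ancestor r x k) := by
  show hT.ancestor r x _ = _
  rw [depth_ancestor]
  rcases le_total k (hT.depth r x) with h | h
  · rw [min_eq_left h]
  · rw [min_eq_right h, hT.ancestor_of_depth_le le_rfl, hT.ancestor_of_depth_le h]

lemma ancestor_mem_subtree {a x : V} (hx : x ∈ hT.subtree r a) {k : ℕ}
    (hk : hT.depth r a ≤ k) : hT.ancestor r x k ∈ hT.subtree r a :=
  (hT.ancestor_ancestor x hk).trans hx

lemma subtree_subset {a v : V} (h : a ∈ hT.subtree r v) : hT.subtree r a ⊆ hT.subtree r v :=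
  fun x hx ↦ by
    have := hT.ancestor_ancestor (r := r) x (hT.depth_le_of_mem_subtree h)
    rw [show hT.ancestor r x (hT.depth r a) = a from hx] at this
    exact this.symm.trans h

lemma mem_subtree_of_mem_support {x z : V} (hz : z ∈ (hT.rootPath r x).support) :
    x ∈ hT.subtree r z := by
  obtain ⟨k, rfl, -⟩ := Walk.mem_support_iff_exists_getVert.mp hz
  exact hT.mem_subtree_ancestor x k

variable {hT} {v a x y : V}

lemma IsChild.adj (h : hT.IsChild r v a) : T.Adj v a := by
  have hadj := hT.adj_ancestor_succ (r := r) (x := a) (k := hT.depth r v) (by rw [h.1]; omega)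
  rwa [show hT.ancestor r a (hT.depth r v) = v from h.2,
    hT.ancestor_of_depth_le (k := hT.depth r v + 1) h.1.le] at hadj

lemma IsChild.eq_of_isChild (h₁ : hT.IsChild r y x) (h₂ : hT.IsChild r v x) : y = v := by
  have : hT.depth r y = hT.depth r v := by have := h₁.1; have := h₂.1; omega
  exact h₁.2.symm.trans (this ▸ h₂.2)

lemma isChild_of_adj_of_mem_support (h : T.Adj x y) (hx : x ∈ (hT.rootPath r y).support) :
    hT.IsChild r x y := by
  have hy : hT.rootPath r y = (hT.rootPath r x).concat h :=
    hT.isAcyclic.path_concat (hT.isPath_rootPath r x) (hT.isPath_rootPath r y) h hx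
  refine ⟨?_, hT.mem_subtree_of_mem_support hx⟩
  rw [depth, depth, hy, Walk.length_concat]

lemma isChild_or_isChild_of_adj (h : T.Adj x y) : hT.IsChild r x y ∨ hT.IsChild r y x := by
  by_cases hx : x ∈ (hT.rootPath r y).support
  · exact .inl (isChild_of_adj_of_mem_support h hx)
  · exact .inr <| isChild_of_adj_of_mem_support h.symm <|
      hT.isAcyclic.mem_support_of_ne_mem_support_of_adj_of_isPath (hT.isPath_rootPath r x)
        (hT.isPath_rootPath r y) h hx

lemma IsChild.subtree_subset (h : hT.IsChild r v a) : hT.subtree r a ⊆ hT.subtree r v \ {v} :=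
  fun x hx ↦ ⟨hT.subtree_subset h.2 hx, fun hxv ↦ by
    have := hT.depth_le_of_mem_subtree hx
    rw [Set.mem_singleton_iff.mp hxv] at this
    have := h.1
    omega⟩

lemma IsChild.eq_of_mem_subtree {b : V} (ha : hT.IsChild r v a) (hb : hT.IsChild r v b)
    (hxa : x ∈ hT.subtree r a) (hxb : x ∈ hT.subtree r b) : a = b := by
  have : hT.depth r a = hT.depth r b := by rw [ha.1, hb.1]
  exact hxa.symm.trans (this ▸ hxb)

lemma exists_isChild_mem_subtree (hx : x ∈ hT.subtree r v) (hne : x ≠ v) :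
    ∃ a, hT.IsChild r v a ∧ x ∈ hT.subtree r a := by
  have hlt := hT.depth_lt_of_mem_subtree hx hne
  refine ⟨hT.ancestor r x (hT.depth r v + 1), ⟨?_, hT.ancestor_mem_subtree hx (by omega)⟩,
    hT.mem_subtree_ancestor x _⟩
  rw [depth_ancestor]
  omega

lemma IsChild.eq_of_adj_of_notMem_subtree (ha : hT.IsChild r v a) (hx : x ∈ hT.subtree r a)
    (hxy : T.Adj x y) (hy : y ∉ hT.subtree r a) : x = a ∧ y = v := by
  rcases isChild_or_isChild_of_adj (r := r) hxy with hc | hc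
  · exact absurd (hT.subtree_subset hx hc.2) hy
  obtain rfl : x = a := by
    by_contra hne
    have := hT.depth_lt_of_mem_subtree hx hne
    have := hc.1
    exact hy (hc.2 ▸ hT.ancestor_mem_subtree hx (by omega))
  exact ⟨rfl, hc.eq_of_isChild ha⟩

lemma ncard_subtree [Finite V] {C : Finset V} (hC : ∀ a, a ∈ C ↔ hT.IsChild r v a) :
    (hT.subtree r v).ncard = ∑ a ∈ C, (hT.subtree r a).ncard + 1 := by
  have hcover : hT.subtree r v \ {v} = ⋃ a ∈ C, hT.subtree r a := by
    refine subset_antisymm (fun x ⟨hx, hne⟩ ↦ ?_)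
      (Set.iUnion₂_subset fun a ha ↦ ((hC a).1 ha).subtree_subset)
    obtain ⟨a, ha, hxa⟩ := exists_isChild_mem_subtree hx hne
    exact Set.mem_biUnion ((hC a).2 ha) hxa
  rw [← Set.ncard_sdiff_singleton_add_one (hT.mem_subtree_self v) (Set.toFinite _), hcover,
    Finset.set_ncard_biUnion]
  exact fun a ha b hb hab ↦ Set.disjoint_left.mpr fun x hxa hxb ↦
    hab (((hC a).1 ha).eq_of_mem_subtree ((hC b).1 hb) hxa hxb)

lemma exists_le_ncard_subtree_and_isChild_lt [Finite V] {t : ℝ} (ht : t ≤ Nat.card V) :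
    ∃ v, t ≤ (hT.subtree r v).ncard ∧
      ∀ a, hT.IsChild r v a → ((hT.subtree r a).ncard : ℝ) < t := by
  obtain ⟨v, hv, hmin⟩ := Set.exists_min_image {u | t ≤ ((hT.subtree r u).ncard : ℝ)}
    (fun u ↦ (hT.subtree r u).ncard) (Set.toFinite _)
    ⟨r, by rwa [Set.mem_ofPred_eq, subtree_root, Set.ncard_univ]⟩
  refine ⟨v, hv, fun a ha ↦ lt_of_not_ge fun hle ↦ (hmin a hle).not_gt ?_⟩
  exact Set.ncard_lt_ncard (ha.subtree_subset.trans_ssubset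
    (Set.sdiff_singleton_ssubset.2 (hT.mem_subtree_self v))) (Set.toFinite _)

lemma exists_isChild_sum_ncard_mem_Icc [Finite V] {Δ : ℕ} (hΔ1 : 1 ≤ Δ)
    (hΔ : ∀ w, (T.neighborSet w).ncard ≤ Δ) {t : ℝ} (ht₀ : 0 ≤ t) (ht : t ≤ Nat.card V) :
    ∃ v, ∃ A : Finset V, (∀ a ∈ A, hT.IsChild r v a) ∧
      (∀ a ∈ A, ((hT.subtree r a).ncard : ℝ) < t) ∧ A.card ≤ Δ ∧
      t - 2 * Δ ≤ ∑ a ∈ A, ((hT.subtree r a \ {a}).ncard : ℝ) ∧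
      ∑ a ∈ A, ((hT.subtree r a \ {a}).ncard : ℝ) ≤ 2 * t := by
  obtain ⟨v, hv, hsmall⟩ := hT.exists_le_ncard_subtree_and_isChild_lt ht
  set C := (Set.toFinite {a | hT.IsChild r v a}).toFinset
  have hC : ∀ a, a ∈ C ↔ hT.IsChild r v a := fun a ↦ Set.Finite.mem_toFinset _
  have hCΔ : C.card ≤ Δ := by
    rw [← Set.ncard_coe_finset]
    exact (Set.ncard_le_ncard (fun a ha ↦ ((hC a).1 ha).adj) (Set.toFinite _)).trans (hΔ v)
  have hsub : ∀ a, ((hT.subtree r a \ {a}).ncard : ℝ) + 1 = (hT.subtree r a).ncard := fun a ↦ by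
    exact_mod_cast Set.ncard_sdiff_singleton_add_one (hT.mem_subtree_self a) (Set.toFinite _)
  have hsumC : ∑ a ∈ C, ((hT.subtree r a \ {a}).ncard : ℝ) + C.card + 1 =
      (hT.subtree r v).ncard := by
    rw [hT.ncard_subtree hC]
    push_cast
    simp [← hsub, Finset.sum_add_distrib]
  obtain ⟨A, hAC, hA⟩ := C.exists_subset_sum_mem_Icc _ (L := t - 2 * Δ) (U := 2 * t)
    (by linarith [(show (1 : ℝ) ≤ Δ by exact_mod_cast hΔ1),
      (show (C.card : ℝ) ≤ Δ by exact_mod_cast hCΔ)]) (by positivity)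
    fun a ha ↦ by linarith [hsub a, hsmall a ((hC a).1 ha)]
  exact ⟨v, A, fun a ha ↦ (hC a).1 (hAC ha), fun a ha ↦ hsmall a ((hC a).1 (hAC ha)),
    (Finset.card_le_card hAC).trans hCΔ, hA⟩

lemma reachable_of_mem_subtree (H : SimpleGraph V)
    (hH : ∀ y x, hT.IsChild r y x → x ∈ hT.subtree r a → x ≠ a → H.Adj y x)
    (hx : x ∈ hT.subtree r a) : H.Reachable a x := by
  obtain ⟨n, hn⟩ : ∃ n, hT.depth r x = n := ⟨_, rfl⟩
  induction n generalizing x with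
  | zero => rw [hT.eq_of_mem_subtree_of_depth_le hx (hn ▸ Nat.zero_le _)]
  | succ n ih =>
    by_cases hxa : x = a
    · rw [hxa]
    have hda : hT.depth r a ≤ n := by have := hT.depth_lt_of_mem_subtree hx hxa; omega
    have hpx : hT.IsChild r (hT.ancestor r x n) x :=
      ⟨by rw [depth_ancestor]; omega, hT.mem_subtree_ancestor x n⟩
    exact (ih (hT.ancestor_mem_subtree hx hda) (by rw [depth_ancestor]; omega)).trans
      (hH _ x hpx hx hxa).reachable

lemma connected_induce_of_ancestor_mem {S : Set V} (hr : r ∈ S)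
    (hS : ∀ x ∈ S, ∀ k, hT.ancestor r x k ∈ S) : (T.induce S).Connected := by
  refine T.induce_connected_of_patches r hr fun {x} hx ↦
    ⟨{z | z ∈ (hT.rootPath r x).support}, fun z hz ↦ ?_, Walk.start_mem_support _,
      Walk.end_mem_support _, (hT.rootPath r x).connected_induce_support.preconnected _ _⟩
  obtain ⟨k, rfl, -⟩ := Walk.mem_support_iff_exists_getVert.mp hz
  exact hS x hx k

variable (hT r) in
def prune (A : Finset V) : Set V := (⋃ a ∈ A, hT.subtree r a \ {a})ᶜ

variable {A : Finset V}

lemma mem_prune : x ∈ hT.prune r A ↔ ∀ a ∈ A, x ∈ hT.subtree r a → x = a := by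
  simp [prune]

lemma root_mem_prune : r ∈ hT.prune r A :=
  mem_prune.2 fun _ _ hr ↦ hT.eq_of_mem_subtree_of_depth_le hr (by rw [depth_root]; omega)

lemma ancestor_mem_prune (hx : x ∈ hT.prune r A) (k : ℕ) : hT.ancestor r x k ∈ hT.prune r A := by
  refine mem_prune.2 fun a ha hka ↦ ?_
  obtain rfl : x = a :=
    mem_prune.1 hx a ha (hT.subtree_subset hka (hT.mem_subtree_ancestor x k))
  have := hT.depth_le_of_mem_subtree hka
  rw [depth_ancestor] at this
  exact hT.ancestor_of_depth_le (by omega)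

lemma connected_prune : ((⊤ : T.Subgraph).induce (hT.prune r A)).Connected :=
  connected_induce_iff.1 <|
    hT.connected_induce_of_ancestor_mem root_mem_prune fun _ hx ↦ ancestor_mem_prune hx

lemma mem_prune_of_forall_isChild (hA : ∀ a ∈ A, hT.IsChild r v a) : v ∈ hT.prune r A :=
  mem_prune.2 fun a ha hva ↦ (((hA a ha).subtree_subset hva).2 rfl).elim

lemma mem_prune_of_mem (hA : ∀ a ∈ A, hT.IsChild r v a) (ha : a ∈ A) : a ∈ hT.prune r A :=
  mem_prune.2 fun b hb hab ↦ (hA a ha).eq_of_mem_subtree (hA b hb) (hT.mem_subtree_self a) hab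

lemma ncard_prune [Finite V] (hA : ∀ a ∈ A, hT.IsChild r v a) :
    (hT.prune r A).ncard + ∑ a ∈ A, (hT.subtree r a \ {a}).ncard = Nat.card V := by
  rw [prune, ← Finset.set_ncard_biUnion, add_comm, Set.ncard_add_ncard_compl]
  exact fun a ha b hb hab ↦ Set.disjoint_left.mpr fun x hxa hxb ↦
    hab ((hA a ha).eq_of_mem_subtree (hA b hb) hxa.1 hxb.1)

lemma mem_subtree_of_adj_deleteEdges (hA : ∀ a ∈ A, hT.IsChild r v a) (ha : a ∈ A)
    (hx : x ∈ hT.subtree r a)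
    (h : (T.deleteEdges ((⊤ : T.Subgraph).induce (hT.prune r A)).edgeSet).Adj x y) :
    y ∈ hT.subtree r a := by
  obtain ⟨hxy, hcut⟩ := deleteEdges_edgeSet_induce_top_adj.1 h
  by_contra hy
  obtain ⟨rfl, rfl⟩ := (hA a ha).eq_of_adj_of_notMem_subtree hx hxy hy
  exact hcut ⟨mem_prune_of_mem hA ha, mem_prune_of_forall_isChild hA⟩

lemma exists_mem_subtree_of_notMem_prune (h : x ∉ hT.prune r A) :
    ∃ a ∈ A, x ∈ hT.subtree r a := by
  simp only [mem_prune, not_forall] at h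
  obtain ⟨a, ha, hxa, -⟩ := h
  exact ⟨a, ha, hxa⟩

lemma exists_mem_subtree_of_adj_deleteEdges (hA : ∀ a ∈ A, hT.IsChild r v a)
    (h : (T.deleteEdges ((⊤ : T.Subgraph).induce (hT.prune r A)).edgeSet).Adj x y) :
    ∃ a ∈ A, x ∈ hT.subtree r a := by
  have hcut := (deleteEdges_edgeSet_induce_top_adj.1 h).2
  by_cases hx : x ∈ hT.prune r A
  · obtain ⟨a, ha, hya⟩ := exists_mem_subtree_of_notMem_prune fun hy ↦ hcut ⟨hx, hy⟩
    exact ⟨a, ha, mem_subtree_of_adj_deleteEdges hA ha hya h.symm⟩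
  · exact exists_mem_subtree_of_notMem_prune hx

lemma reachable_deleteEdges_of_mem_subtree (ha : a ∈ A) (hx : x ∈ hT.subtree r a) :
    (T.deleteEdges ((⊤ : T.Subgraph).induce (hT.prune r A)).edgeSet).Reachable a x :=
  hT.reachable_of_mem_subtree _ (fun _ _ hyz hz hne ↦ deleteEdges_edgeSet_induce_top_adj.2
    ⟨hyz.adj, fun h ↦ hne (mem_prune.1 h.2 a ha hz)⟩) hx

lemma exists_supp_eq_subtree (hA : ∀ a ∈ A, hT.IsChild r v a)
    {c : (T.deleteEdges ((⊤ : T.Subgraph).induce (hT.prune r A)).edgeSet).ConnectedComponent}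
    (hc : 1 < c.supp.ncard) : ∃ a ∈ A, c.supp = hT.subtree r a := by
  obtain ⟨x, hx, y, hxy⟩ := c.exists_adj_of_one_lt_ncard_supp hc
  obtain ⟨a, ha, hxa⟩ := exists_mem_subtree_of_adj_deleteEdges hA hxy
  obtain rfl : c = _ := ((c.mem_supp_iff x).1 hx).symm.trans
    (ConnectedComponent.sound (reachable_deleteEdges_of_mem_subtree ha hxa).symm)
  refine ⟨a, ha, subset_antisymm (ConnectedComponent.supp_connectedComponentMk_subset
    (hT.mem_subtree_self a) fun _ _ hz h ↦ mem_subtree_of_adj_deleteEdges hA ha hz h) ?_⟩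
  exact fun z hz ↦ ConnectedComponent.sound (reachable_deleteEdges_of_mem_subtree ha hz).symm

lemma ncard_setOf_one_lt_ncard_supp_le [Finite V] (hA : ∀ a ∈ A, hT.IsChild r v a) :
    {c : (T.deleteEdges ((⊤ : T.Subgraph).induce (hT.prune r A)).edgeSet).ConnectedComponent |
      1 < c.supp.ncard}.ncard ≤ A.card := by
  calc _ ≤ (_ '' (A : Set V)).ncard := Set.ncard_le_ncard (fun c hc ↦ by
          obtain ⟨a, ha, hca⟩ := exists_supp_eq_subtree hA hc
          exact ⟨a, ha, (c.mem_supp_iff a).1 (hca ▸ hT.mem_subtree_self a)⟩) (Set.toFinite _)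
    _ ≤ A.card := (Set.ncard_image_le (Set.toFinite _)).trans (Set.ncard_coe_finset A).le

end SimpleGraph.IsTree

/-- Tree splitting. Let `Δ ≥ 1`, `0 ≤ λ < 1`, and `T` a rooted tree on `n`
vertices with maximum degree at most `Δ`. Then there is a subtree `Q` containing the root
with `(1−2λ)·n ≤ |Q| ≤ (1−λ)·n + 2Δ` such that `T` minus the edges of `Q` (isolated
vertices removed, i.e. looking only at components with more than one vertex) has at most
`Δ` components, each of order at most `λ·n`. -/
theorem stmt10 {W : Type} [Fintype W] (T : SimpleGraph W) (hT : T.IsTree) (r : W)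
    (Δ : ℕ) (hΔ1 : 1 ≤ Δ) (hΔ : ∀ w : W, (T.neighborSet w).ncard ≤ Δ)
    (lam : ℝ) (h0 : 0 ≤ lam) (h1 : lam < 1) :
    ∃ Q : T.Subgraph, Q.Connected ∧ r ∈ Q.verts ∧
      (1 - 2 * lam) * (Fintype.card W : ℝ) ≤ (Q.verts.ncard : ℝ) ∧
      (Q.verts.ncard : ℝ) ≤ (1 - lam) * (Fintype.card W : ℝ) + 2 * Δ ∧
      ({c : (T.deleteEdges Q.edgeSet).ConnectedComponent | 1 < c.supp.ncard}).ncard ≤ Δ ∧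
      ∀ c : (T.deleteEdges Q.edgeSet).ConnectedComponent, 1 < c.supp.ncard →
        (c.supp.ncard : ℝ) ≤ lam * (Fintype.card W : ℝ) := by
  have hn : (Nat.card W : ℝ) = Fintype.card W := by rw [Nat.card_eq_fintype_card]
  obtain ⟨v, A, hA, hsmall, hAΔ, hlow, hup⟩ := hT.exists_isChild_sum_ncard_mem_Icc (r := r) hΔ1 hΔ
    (t := lam * Fintype.card W) (by positivity)
    (hn ▸ mul_le_of_le_one_left (Nat.cast_nonneg _) h1.le)
  have hQ : ((hT.prune r A).ncard : ℝ) + ∑ a ∈ A, ((hT.subtree r a \ {a}).ncard : ℝ) =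
      Fintype.card W := by
    rw [← hn]
    exact_mod_cast hT.ncard_prune hA
  refine ⟨(⊤ : T.Subgraph).induce (hT.prune r A), hT.connected_prune, hT.root_mem_prune,
    ?_, ?_, (hT.ncard_setOf_one_lt_ncard_supp_le hA).trans hAΔ, fun c hc ↦ ?_⟩
  · rw [SimpleGraph.Subgraph.induce_verts]
    linarith
  · rw [SimpleGraph.Subgraph.induce_verts]
    linarith
  · obtain ⟨a, ha, hca⟩ := hT.exists_supp_eq_subtree hA hc
    exact hca ▸ (hsmall a ha).le
end
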